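/- Let μ = 1 if rank(G₀) = m = n, μ = √2 if rank(G₀) = min(m, n) and m ≠ n, and μ = (1 + √5)/2 if rank(G₀) < min(m, n). Suppose x ∈ ℝⁿ satisfies (L_f + L_G)·‖x‖ ≤ σ. For a unit vector d ∈ Im(G₀), define K(d) = (σ − L_G‖x‖ − L_f‖x‖) / (‖G₀†d‖·(σ − L_G‖x‖) + μ·σ⁻¹·L_G‖x‖). Then for every unit vector d ∈ Im(R), every real k with 0 ≤ k ≤ K(d), and every consistent pair (f̂, Ĝ), there exists u ∈ ℝᵐ with ‖u‖ ≤ 1 such that f₀ + k·d = f̂(x) + Ĝ(x)·u; that is, f₀ + k·d belongs to the guaranteed velocity set V^G_x. -/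

import Mathlib

/-!
Put `B = Ĝ(x)`. The Lipschitz bound gives `‖B - G₀‖ ≤ L_G‖x‖`, and `G₀` expands vectors of
`Im G₀ᵀ` (the span of the right singular vectors with nonzero singular value) by at least `σ`,
so `B` expands them by at least `σ - L_G‖x‖ > 0`. Since `B = R Ĥ(x)` maps into `Im R`, whose
dimension is `rank G₀ = dim Im G₀ᵀ`, `B` maps `Im G₀ᵀ` isomorphically onto `Im R`. Solving
`B s₁ = f₀ - f̂(x)` and `B s₂ = d - B w` there, the control `u = s₁ + k (w + s₂)` satisfies
`f̂(x) + B u = f₀ + k d`, and the two preimage bounds, together with `‖w‖ ≤ σ⁻¹ ≤ μ σ⁻¹`,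
give `‖u‖ ≤ 1` as soon as `k ≤ K(d)`.
-/
open Matrix Set

noncomputable def matOpNorm {n m : ℕ} (M : Matrix (Fin n) (Fin m) ℝ) : ℝ :=
  ‖LinearMap.toContinuousLinearMap (Matrix.toEuclideanLin M)‖

noncomputable def appMat {n m : ℕ} (M : Matrix (Fin n) (Fin m) ℝ)
    (v : EuclideanSpace ℝ (Fin m)) : EuclideanSpace ℝ (Fin n) :=
  Matrix.toEuclideanLin M v

noncomputable def colSpace {n m : ℕ} (M : Matrix (Fin n) (Fin m) ℝ) :
    Submodule ℝ (EuclideanSpace ℝ (Fin n)) :=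
  LinearMap.range (Matrix.toEuclideanLin M)

noncomputable def minSV {n m : ℕ} (M : Matrix (Fin n) (Fin m) ℝ) : ℝ :=
  Real.sqrt (sInf {μ : ℝ | μ ≠ 0 ∧
    ∃ i, (Matrix.isHermitian_conjTranspose_mul_self M).eigenvalues i = μ})

/-- A pair `(fh, Gh)` consistent with the prior knowledge of the dynamics. -/
structure Consistent {n m : ℕ} (R : Matrix (Fin n) (Fin m) ℝ) (Lf LG : ℝ)
    (f₀ : EuclideanSpace ℝ (Fin n)) (G₀ : Matrix (Fin n) (Fin m) ℝ)
    (fh : EuclideanSpace ℝ (Fin n) → EuclideanSpace ℝ (Fin n))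
    (Gh : EuclideanSpace ℝ (Fin n) → Matrix (Fin n) (Fin m) ℝ) : Prop where
  lipf : ∀ y z, ‖fh y - fh z‖ ≤ Lf * ‖y - z‖
  lipG : ∀ y z, matOpNorm (Gh y - Gh z) ≤ LG * ‖y - z‖
  f_zero : fh 0 = f₀
  G_zero : Gh 0 = G₀
  f_im : ∀ y, fh y ∈ colSpace R
  factor : ∃ Hh : EuclideanSpace ℝ (Fin n) → Matrix (Fin m) (Fin m) ℝ,
    IsUnit (Hh 0) ∧ ∀ y, Gh y = R * Hh y

/-- The guaranteed velocity set at `x`. -/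
noncomputable def GVS {n m : ℕ} (R : Matrix (Fin n) (Fin m) ℝ) (Lf LG : ℝ)
    (f₀ : EuclideanSpace ℝ (Fin n)) (G₀ : Matrix (Fin n) (Fin m) ℝ)
    (x : EuclideanSpace ℝ (Fin n)) : Set (EuclideanSpace ℝ (Fin n)) :=
  ⋂ (fh : EuclideanSpace ℝ (Fin n) → EuclideanSpace ℝ (Fin n))
    (Gh : EuclideanSpace ℝ (Fin n) → Matrix (Fin n) (Fin m) ℝ)
    (_ : Consistent R Lf LG f₀ G₀ fh Gh),
      {w | ∃ u : EuclideanSpace ℝ (Fin m), ‖u‖ ≤ 1 ∧ w = fh x + appMat (Gh x) u}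

open scoped RealInnerProductSpace

theorem Matrix.IsHermitian.repr_eigenvectorBasis_toEuclideanLin {ι : Type*} [Fintype ι]
    [DecidableEq ι] {A : Matrix ι ι ℝ} (hA : A.IsHermitian) (v : EuclideanSpace ℝ ι) (i : ι) :
    hA.eigenvectorBasis.repr (toEuclideanLin A v) i =
      hA.eigenvalues i * hA.eigenvectorBasis.repr v i := by
  simp only [eigenvectorBasis, eigenvalues, eigenvalues₀, OrthonormalBasis.repr_reindex]
  exact LinearMap.IsSymmetric.eigenvectorBasis_apply_self_apply _ _ _ _

theorem Submodule.map_eq_of_disjoint_ker_of_finrank_eq {K V W : Type*} [Field K]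
    [AddCommGroup V] [Module K V] [AddCommGroup W] [Module K W] {f : V →ₗ[K] W}
    {S : Submodule K V} {T : Submodule K W} [FiniteDimensional K T] (hST : S.map f ≤ T)
    (hf : Disjoint S (LinearMap.ker f)) (hdim : Module.finrank K S = Module.finrank K T) :
    S.map f = T := by
  refine Submodule.eq_of_le_of_finrank_eq hST ?_
  rw [← hdim, ← LinearMap.range_domRestrict]
  exact LinearMap.finrank_range_of_inj (LinearMap.injective_domRestrict_iff.mpr hf)

section Matrices

variable {n m : ℕ}

lemma matOpNorm_nonneg (M : Matrix (Fin n) (Fin m) ℝ) : 0 ≤ matOpNorm M := norm_nonneg _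

lemma norm_appMat_le (M : Matrix (Fin n) (Fin m) ℝ) (v : EuclideanSpace ℝ (Fin m)) :
    ‖appMat M v‖ ≤ matOpNorm M * ‖v‖ :=
  (LinearMap.toContinuousLinearMap (toEuclideanLin M)).le_opNorm v

lemma appMat_sub (M N : Matrix (Fin n) (Fin m) ℝ) (v : EuclideanSpace ℝ (Fin m)) :
    appMat (M - N) v = appMat M v - appMat N v := by
  simp [appMat]

lemma appMat_mul {p : ℕ} (M : Matrix (Fin n) (Fin p) ℝ) (N : Matrix (Fin p) (Fin m) ℝ)
    (v : EuclideanSpace ℝ (Fin m)) : appMat (M * N) v = appMat M (appMat N v) := by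
  simp [appMat]

lemma finrank_colSpace (M : Matrix (Fin n) (Fin m) ℝ) :
    Module.finrank ℝ (colSpace M) = M.rank :=
  (M.rank_eq_finrank_range_toLin (PiLp.basisFun 2 ℝ (Fin n)) (PiLp.basisFun 2 ℝ (Fin m))).symm

lemma sub_mul_norm_le_norm_appMat {M B : Matrix (Fin n) (Fin m) ℝ} {c L : ℝ}
    {v : EuclideanSpace ℝ (Fin m)} (hMv : c * ‖v‖ ≤ ‖appMat M v‖) (hBM : matOpNorm (B - M) ≤ L) :
    (c - L) * ‖v‖ ≤ ‖appMat B v‖ := by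
  have hdiff : ‖appMat B v - appMat M v‖ ≤ L * ‖v‖ := by
    rw [← appMat_sub]
    exact (norm_appMat_le _ _).trans (by gcongr)
  linarith [norm_sub_norm_le (appMat M v) (appMat B v), norm_sub_rev (appMat M v) (appMat B v)]

theorem exists_appMat_eq_of_lower_bound {B : Matrix (Fin n) (Fin m) ℝ}
    {S : Submodule ℝ (EuclideanSpace ℝ (Fin m))} {T : Submodule ℝ (EuclideanSpace ℝ (Fin n))}
    (hBT : ∀ s, appMat B s ∈ T) (hdim : Module.finrank ℝ S = Module.finrank ℝ T) {c : ℝ}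
    (hc : 0 < c) (hlow : ∀ s ∈ S, c * ‖s‖ ≤ ‖appMat B s‖) {v : EuclideanSpace ℝ (Fin n)}
    (hv : v ∈ T) : ∃ s ∈ S, appMat B s = v ∧ c * ‖s‖ ≤ ‖v‖ := by
  have hker : Disjoint S (LinearMap.ker (toEuclideanLin B)) := by
    refine Submodule.disjoint_def.mpr fun s hs hBs => norm_le_zero_iff.mp ?_
    have hcs := hlow s hs
    rw [show appMat B s = 0 from hBs, norm_zero] at hcs
    exact nonpos_of_mul_nonpos_right hcs hc
  have hmap := Submodule.map_eq_of_disjoint_ker_of_finrank_eq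
    (Submodule.map_le_iff_le_comap.mpr fun s _ => hBT s) hker hdim
  obtain ⟨s, hs, rfl⟩ := hmap.ge hv
  exact ⟨s, hs, rfl, hlow s hs⟩

end Matrices

section SingularValues

variable {n m : ℕ} (M : Matrix (Fin n) (Fin m) ℝ)

local notation "𝐞" => IsHermitian.eigenvectorBasis (isHermitian_conjTranspose_mul_self M)
local notation "𝛌" => IsHermitian.eigenvalues (isHermitian_conjTranspose_mul_self M)

lemma sq_norm_appMat_eq_sum (v : EuclideanSpace ℝ (Fin m)) :
    ‖appMat M v‖ ^ 2 = ∑ i, 𝛌 i * 𝐞.repr v i ^ 2 := by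
  calc ‖appMat M v‖ ^ 2 = ⟪v, toEuclideanLin (Mᴴ * M) v⟫ := by
        rw [toLpLin_mul_same, LinearMap.comp_apply, toEuclideanLin_conjTranspose_eq_adjoint,
          LinearMap.adjoint_inner_right, real_inner_self_eq_norm_sq]
        rfl
    _ = ∑ i, 𝛌 i * 𝐞.repr v i ^ 2 := by
        rw [← 𝐞.repr.inner_map_map]
        simp only [PiLp.inner_apply, RCLike.inner_apply, conj_trivial,
          IsHermitian.repr_eigenvectorBasis_toEuclideanLin]
        exact Finset.sum_congr rfl fun i _ => by ring

lemma appMat_eigenvectorBasis_eq_zero {i : Fin m} (hi : 𝛌 i = 0) : appMat M (𝐞 i) = 0 := by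
  have h := sq_norm_appMat_eq_sum M (𝐞 i)
  rw [Finset.sum_eq_single i (fun j _ hj => by simp [OrthonormalBasis.repr_self, hj]) (by simp),
    hi, zero_mul] at h
  exact norm_eq_zero.mp (pow_eq_zero_iff two_ne_zero |>.mp h)

lemma repr_eq_zero_of_mem_colSpace_transpose {v : EuclideanSpace ℝ (Fin m)}
    (hv : v ∈ colSpace Mᵀ) {i : Fin m} (hi : 𝛌 i = 0) : 𝐞.repr v i = 0 := by
  obtain ⟨z, rfl⟩ := hv
  rw [OrthonormalBasis.repr_apply_apply, ← conjTranspose_eq_transpose_of_trivial,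
    toEuclideanLin_conjTranspose_eq_adjoint, LinearMap.adjoint_inner_right,
    show toEuclideanLin M (𝐞 i) = 0 from appMat_eigenvectorBasis_eq_zero M hi, inner_zero_left]

lemma minSV_nonneg : 0 ≤ minSV M := Real.sqrt_nonneg _

lemma sq_minSV : minSV M ^ 2 = sInf {μ : ℝ | μ ≠ 0 ∧ ∃ i, 𝛌 i = μ} :=
  Real.sq_sqrt <| Real.sInf_nonneg fun _ ⟨_, i, hi⟩ =>
    hi ▸ eigenvalues_conjTranspose_mul_self_nonneg M i

lemma sq_minSV_le_eigenvalue {i : Fin m} (hi : 𝛌 i ≠ 0) : minSV M ^ 2 ≤ 𝛌 i := by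
  rw [sq_minSV]
  exact csInf_le ((Set.finite_range _).subset fun _ h => h.2).bddBelow ⟨hi, i, rfl⟩

theorem minSV_mul_norm_le {v : EuclideanSpace ℝ (Fin m)} (hv : v ∈ colSpace Mᵀ) :
    minSV M * ‖v‖ ≤ ‖appMat M v‖ := by
  have hsq : (minSV M * ‖v‖) ^ 2 ≤ ‖appMat M v‖ ^ 2 := by
    rw [mul_pow, ← 𝐞.repr.norm_map v, EuclideanSpace.norm_sq_eq, Finset.mul_sum,
      sq_norm_appMat_eq_sum]
    refine Finset.sum_le_sum fun i _ => ?_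
    rw [Real.norm_eq_abs, sq_abs]
    by_cases hi : 𝛌 i = 0
    · rw [repr_eq_zero_of_mem_colSpace_transpose M hv hi, hi]; simp
    · exact mul_le_mul_of_nonneg_right (sq_minSV_le_eigenvalue M hi) (sq_nonneg _)
  exact (pow_le_pow_iff_left₀ (mul_nonneg (minSV_nonneg M) (norm_nonneg v)) (norm_nonneg _)
    two_ne_zero).mp hsq

theorem minSV_pos (hM : M ≠ 0) : 0 < minSV M := by
  obtain ⟨i, hi⟩ : ∃ i, 𝛌 i ≠ 0 := by
    by_contra! h
    exact hM (conjTranspose_mul_self_eq_zero.mp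
      ((isHermitian_conjTranspose_mul_self M).eigenvalues_eq_zero_iff.mp (funext h)))
  obtain ⟨hS, j, hj⟩ : sInf {μ : ℝ | μ ≠ 0 ∧ ∃ i, 𝛌 i = μ} ∈ {μ : ℝ | μ ≠ 0 ∧ ∃ i, 𝛌 i = μ} :=
    Set.Nonempty.csInf_mem ⟨_, hi, i, rfl⟩ ((Set.finite_range _).subset fun _ h => h.2)
  exact Real.sqrt_pos.mpr <|
    lt_of_le_of_ne (hj ▸ eigenvalues_conjTranspose_mul_self_nonneg M j) (Ne.symm hS)

end SingularValues

theorem norm_add_smul_add_le_one {E : Type*} [SeminormedAddCommGroup E] [NormedSpace ℝ E]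
    {s₁ s₂ w : E} {σ L ℓ μ k : ℝ} (hσL : 0 < σ - L) (hL : 0 ≤ L) (hμ : 1 ≤ μ) (hk : 0 ≤ k)
    (hw : σ * ‖w‖ ≤ 1) (hw₀ : 0 < ‖w‖) (hs₁ : (σ - L) * ‖s₁‖ ≤ ℓ)
    (hs₂ : (σ - L) * ‖s₂‖ ≤ L * ‖w‖)
    (hkK : k ≤ (σ - L - ℓ) / (‖w‖ * (σ - L) + μ * σ⁻¹ * L)) :
    ‖s₁ + k • (w + s₂)‖ ≤ 1 := by
  have hσ : 0 < σ := by linarith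
  have hwσ : ‖w‖ ≤ μ * σ⁻¹ := calc
    ‖w‖ = σ⁻¹ * (σ * ‖w‖) := by field_simp
    _ ≤ 1 * σ⁻¹ * 1 := by rw [one_mul]; gcongr
    _ ≤ μ * σ⁻¹ := by rw [mul_one]; gcongr
  have hD : 0 < ‖w‖ * (σ - L) + μ * σ⁻¹ * L := by
    nlinarith [mul_pos hw₀ hσL, mul_le_mul_of_nonneg_left hwσ hL, mul_nonneg hL (norm_nonneg w)]
  have hkD := (le_div_iff₀ hD).mp hkK
  have htri : ‖s₁ + k • (w + s₂)‖ ≤ ‖s₁‖ + k * (‖w‖ + ‖s₂‖) := calc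
    ‖s₁ + k • (w + s₂)‖ ≤ ‖s₁‖ + k * ‖w + s₂‖ := by
      rw [← norm_smul_of_nonneg hk]; exact norm_add_le _ _
    _ ≤ ‖s₁‖ + k * (‖w‖ + ‖s₂‖) := by gcongr; exact norm_add_le _ _
  refine le_of_mul_le_mul_left ?_ hσL
  calc (σ - L) * ‖s₁ + k • (w + s₂)‖ ≤ (σ - L) * (‖s₁‖ + k * (‖w‖ + ‖s₂‖)) := by gcongr
    _ = (σ - L) * ‖s₁‖ + k * (‖w‖ * (σ - L) + (σ - L) * ‖s₂‖) := by ring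
    _ ≤ ℓ + k * (‖w‖ * (σ - L) + μ * σ⁻¹ * L) := by
      have : (σ - L) * ‖s₂‖ ≤ μ * σ⁻¹ * L := by nlinarith [mul_le_mul_of_nonneg_left hwσ hL]
      gcongr ?_ + k * (_ + ?_)
    _ ≤ (σ - L) * 1 := by linarith

theorem Real.one_le_ite_sqrt_two_goldenRatio (p q : Prop) [Decidable p] [Decidable q] :
    1 ≤ if p then 1 else if q then √2 else (1 + √5) / 2 := by
  split_ifs
  · exact le_rfl
  · exact Real.one_le_sqrt.mpr one_le_two
  · exact Real.one_lt_goldenRatio.le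

namespace Consistent

variable {n m : ℕ} {R G₀ : Matrix (Fin n) (Fin m) ℝ} {Lf LG : ℝ}
  {f₀ : EuclideanSpace ℝ (Fin n)} {fh : EuclideanSpace ℝ (Fin n) → EuclideanSpace ℝ (Fin n)}
  {Gh : EuclideanSpace ℝ (Fin n) → Matrix (Fin n) (Fin m) ℝ}

lemma norm_sub_le (hcons : Consistent R Lf LG f₀ G₀ fh Gh) (x : EuclideanSpace ℝ (Fin n)) :
    ‖f₀ - fh x‖ ≤ Lf * ‖x‖ := by
  simpa [hcons.f_zero] using hcons.lipf 0 x

lemma matOpNorm_sub_le (hcons : Consistent R Lf LG f₀ G₀ fh Gh) (x : EuclideanSpace ℝ (Fin n)) :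
    matOpNorm (Gh x - G₀) ≤ LG * ‖x‖ := by
  simpa [hcons.G_zero] using hcons.lipG x 0

lemma appMat_mem_colSpace (hcons : Consistent R Lf LG f₀ G₀ fh Gh) (x : EuclideanSpace ℝ (Fin n))
    (s : EuclideanSpace ℝ (Fin m)) : appMat (Gh x) s ∈ colSpace R := by
  obtain ⟨Hh, -, hGh⟩ := hcons.factor
  rw [hGh x, appMat_mul]
  exact LinearMap.mem_range_self _ _

theorem exists_appMat_eq (hcons : Consistent R Lf LG f₀ G₀ fh Gh) {H₀ : Matrix (Fin m) (Fin m) ℝ}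
    (hH₀ : IsUnit H₀) (hG₀ : G₀ = R * H₀) {x : EuclideanSpace ℝ (Fin n)}
    (hσL : 0 < minSV G₀ - LG * ‖x‖) {v : EuclideanSpace ℝ (Fin n)} (hv : v ∈ colSpace R) :
    ∃ s, appMat (Gh x) s = v ∧ (minSV G₀ - LG * ‖x‖) * ‖s‖ ≤ ‖v‖ := by
  have hdim : Module.finrank ℝ (colSpace G₀ᵀ) = Module.finrank ℝ (colSpace R) := by
    rw [finrank_colSpace, finrank_colSpace, rank_transpose, hG₀,
      rank_mul_eq_left_of_isUnit_det _ _ ((isUnit_iff_isUnit_det H₀).mp hH₀)]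
  obtain ⟨s, -, hs⟩ := exists_appMat_eq_of_lower_bound (hcons.appMat_mem_colSpace x) hdim hσL
    (fun s hs => sub_mul_norm_le_norm_appMat (minSV_mul_norm_le G₀ hs) (hcons.matOpNorm_sub_le x))
    hv
  exact ⟨s, hs⟩

end Consistent

theorem theorem2_advanced_underapprox_general {n m : ℕ} (R : Matrix (Fin n) (Fin m) ℝ)
    (Lf LG : ℝ) (hLf : 0 < Lf)
    (f₀ : EuclideanSpace ℝ (Fin n)) (hf₀ : f₀ ∈ colSpace R)
    (H₀ : Matrix (Fin m) (Fin m) ℝ) (hH₀ : IsUnit H₀)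
    (G₀ : Matrix (Fin n) (Fin m) ℝ) (hG₀fac : G₀ = R * H₀) (hG₀ : G₀ ≠ 0)
    (μ : ℝ)
    (hμ : μ = if G₀.rank = m ∧ m = n then 1
      else if G₀.rank = min m n then Real.sqrt 2
      else (1 + Real.sqrt 5) / 2)
    (x : EuclideanSpace ℝ (Fin n)) (hx : (Lf + LG) * ‖x‖ ≤ minSV G₀) :
    ∀ d : EuclideanSpace ℝ (Fin n), ‖d‖ = 1 → d ∈ colSpace R →
      ∀ w : EuclideanSpace ℝ (Fin m), w ∈ colSpace G₀ᵀ → appMat G₀ w = d →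
        ∀ k : ℝ, 0 ≤ k →
          k ≤ (minSV G₀ - LG * ‖x‖ - Lf * ‖x‖) /
            (‖w‖ * (minSV G₀ - LG * ‖x‖) + μ * (minSV G₀)⁻¹ * (LG * ‖x‖)) →
          ∀ fh Gh, Consistent R Lf LG f₀ G₀ fh Gh →
            ∃ u : EuclideanSpace ℝ (Fin m), ‖u‖ ≤ 1 ∧
              f₀ + k • d = fh x + appMat (Gh x) u := by
  intro d hd hdR w hwG₀ hG₀w k hk hkK fh Gh hcons
  have hGx := hcons.matOpNorm_sub_le x
  have hL : 0 ≤ LG * ‖x‖ := (matOpNorm_nonneg _).trans hGx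
  have hσL : 0 < minSV G₀ - LG * ‖x‖ := by
    rcases (norm_nonneg x).eq_or_lt with hx₀ | hx₀
    · simpa [← hx₀] using minSV_pos G₀ hG₀
    · nlinarith [mul_pos hLf hx₀]
  obtain ⟨s₁, hs₁, hs₁_le⟩ :=
    hcons.exists_appMat_eq hH₀ hG₀fac hσL (Submodule.sub_mem _ hf₀ (hcons.f_im x))
  obtain ⟨s₂, hs₂, hs₂_le⟩ :=
    hcons.exists_appMat_eq hH₀ hG₀fac hσL (Submodule.sub_mem _ hdR (hcons.appMat_mem_colSpace x w))
  have hdw : ‖d - appMat (Gh x) w‖ ≤ LG * ‖x‖ * ‖w‖ := by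
    rw [← hG₀w, norm_sub_rev, ← appMat_sub]
    exact (norm_appMat_le _ _).trans (by gcongr)
  have hw₀ : w ≠ 0 := by
    rintro rfl
    simp [← hG₀w, appMat] at hd
  refine ⟨s₁ + k • (w + s₂), norm_add_smul_add_le_one hσL hL
    (hμ ▸ Real.one_le_ite_sqrt_two_goldenRatio _ _) hk
    (by simpa [hG₀w, hd] using minSV_mul_norm_le G₀ hwG₀) (norm_pos_iff.mpr hw₀)
    (hs₁_le.trans (hcons.norm_sub_le x)) (hs₂_le.trans hdw) hkK, ?_⟩
  have hGx_lin : appMat (Gh x) (s₁ + k • (w + s₂)) =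
      appMat (Gh x) s₁ + k • (appMat (Gh x) w + appMat (Gh x) s₂) := by
    simp [appMat]
  rw [hGx_lin, hs₁, hs₂, add_sub_cancel]
  abel

/-- **Theorem 2.** With `μ` determined by the rank of `G₀`, for
`(L_f + L_G)‖x‖ ≤ σ`, every unit direction `d ∈ Im R` and every
`0 ≤ k ≤ K(d)`, the point `f₀ + k • d` is achieved by every consistent pair with
an admissible control, i.e. it belongs to the GVS at `x`.  Here `G₀† d` is
formalized as the unique `w ∈ Im G₀ᵀ` with `G₀ w = d`. -/
theorem theorem2_advanced_underapprox {n m : ℕ} (R : Matrix (Fin n) (Fin m) ℝ)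
    (Lf LG : ℝ) (hLf : 0 < Lf) (hLG : 0 < LG)
    (f₀ : EuclideanSpace ℝ (Fin n)) (hf₀ : f₀ ∈ colSpace R)
    (H₀ : Matrix (Fin m) (Fin m) ℝ) (hH₀ : IsUnit H₀)
    (G₀ : Matrix (Fin n) (Fin m) ℝ) (hG₀fac : G₀ = R * H₀) (hG₀ : G₀ ≠ 0)
    (μ : ℝ)
    (hμ : μ = if G₀.rank = m ∧ m = n then 1
      else if G₀.rank = min m n then Real.sqrt 2
      else (1 + Real.sqrt 5) / 2)
    (x : EuclideanSpace ℝ (Fin n)) (hx : (Lf + LG) * ‖x‖ ≤ minSV G₀) :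
    ∀ d : EuclideanSpace ℝ (Fin n), ‖d‖ = 1 → d ∈ colSpace R →
      ∀ w : EuclideanSpace ℝ (Fin m), w ∈ colSpace G₀ᵀ → appMat G₀ w = d →
        ∀ k : ℝ, 0 ≤ k →
          k ≤ (minSV G₀ - LG * ‖x‖ - Lf * ‖x‖) /
            (‖w‖ * (minSV G₀ - LG * ‖x‖) + μ * (minSV G₀)⁻¹ * (LG * ‖x‖)) →
          ∀ fh Gh, Consistent R Lf LG f₀ G₀ fh Gh →
            ∃ u : EuclideanSpace ℝ (Fin m), ‖u‖ ≤ 1 ∧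
              f₀ + k • d = fh x + appMat (Gh x) u :=
  theorem2_advanced_underapprox_general R Lf LG hLf f₀ hf₀ H₀ hH₀ G₀ hG₀fac hG₀ μ hμ x hx
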